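/- Let Δ be a finitary argumentation framework and X ⊆ A admissible. Then ⋂_{k < ω} d^k(n(X)) is the greatest fixpoint of d contained in n(X). -/

import Mathlib

variable {A : Type*}

/-- The defense function of an argumentation framework with attack relation `r`. -/
def defense (r : A → A → Prop) (X : Set A) : Set A :=
  {x | ∀ y, r y x → ∃ z ∈ X, r z y}

/-- The neutrality function. -/
def neut (r : A → A → Prop) (X : Set A) : Set A :=
  {x | ¬ ∃ y ∈ X, r y x}

/-- A framework is finitary if every argument has finitely many attackers. -/
def Finitary (r : A → A → Prop) : Prop := ∀ x, {y | r y x}.Finite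

/-! Since `X` defends itself, `d (n X) ⊆ n X`, so the iterates `d^k (n X)` decrease. With
finitely many attackers per argument, `d` commutes with decreasing intersections, so (Kleene's
theorem, dualised) their intersection is a fixpoint; any fixpoint below `n X` stays below every
iterate by monotonicity. -/

namespace Monotone

open Function

variable {α : Type*} [CompleteLattice α] {f : α → α}

theorem map_iInf_iterate_le (hf : Monotone f) {a : α} (ha : f a ≤ a) :
    f (⨅ k, f^[k] a) ≤ ⨅ k, f^[k] a :=
  le_iInf fun k => calc
    f (⨅ i, f^[i] a) ≤ f (f^[k] a) := hf (iInf_le _ k)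
    _ = f^[k + 1] a := (iterate_succ_apply' f k a).symm
    _ ≤ f^[k] a := hf.antitone_iterate_of_map_le ha k.le_succ

theorem isFixedPt_iInf_iterate (hf : Monotone f) {a : α} (ha : f a ≤ a)
    (hcont : ∀ c : ℕ → α, Antitone c → ⨅ k, f (c k) ≤ f (⨅ k, c k)) :
    IsFixedPt f (⨅ k, f^[k] a) := by
  refine le_antisymm (hf.map_iInf_iterate_le ha) ?_
  calc ⨅ k, f^[k] a ≤ ⨅ k, f (f^[k] a) :=
        le_iInf fun k => (iInf_le _ (k + 1)).trans_eq (iterate_succ_apply' f k a)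
    _ ≤ f (⨅ k, f^[k] a) := hcont _ (hf.antitone_iterate_of_map_le ha)

theorem le_iInf_iterate_of_isFixedPt (hf : Monotone f) {a z : α} (hz : IsFixedPt f z)
    (hza : z ≤ a) : z ≤ ⨅ k, f^[k] a :=
  le_iInf fun k => (iterate_fixed hz k).symm.le.trans (hf.iterate k hza)

end Monotone

section Argumentation

variable (r : A → A → Prop)

theorem defense_mono : Monotone (defense r) := fun _ _ hYZ _ hx y hyx =>
  let ⟨z, hz, hzy⟩ := hx y hyx
  ⟨z, hYZ hz, hzy⟩

variable {r}

theorem defense_neut_subset {X : Set A} (hdef : X ⊆ defense r X) :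
    defense r (neut r X) ⊆ neut r X := by
  rintro x hx ⟨y, hyX, hyx⟩
  obtain ⟨z, hzN, hzy⟩ := hx y hyx
  exact hzN (hdef hyX z hzy)

/-- Over the finitely many attackers `z` of `y`, `∀ k, ∃ z, z ∈ S k` turns into
`∃ z, ∀ k, z ∈ S k` because the `S k` decrease. -/
theorem iInter_defense_subset_defense_iInter (hfin : Finitary r) {S : ℕ → Set A}
    (hS : Antitone S) : ⋂ k, defense r (S k) ⊆ defense r (⋂ k, S k) := by
  intro x hx y hyx
  have : Finite {z | r z y} := (hfin y).to_subtype
  have hswap := iInf_iSup_of_antitone (α := Prop) (ι := {z | r z y}) (ι' := ℕ)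
    (f := fun z k => (z : A) ∈ S k) fun z _ _ hij => @hS _ _ hij z
  simp only [iInf_Prop_eq, iSup_Prop_eq] at hswap
  obtain ⟨⟨z, hzy⟩, hz⟩ := hswap.mp fun k => by
    obtain ⟨z, hz, hzy⟩ := Set.mem_iInter.mp hx k y hyx
    exact ⟨⟨z, hzy⟩, hz⟩
  exact ⟨z, Set.mem_iInter.mpr hz, hzy⟩

end Argumentation

theorem iInter_iterates_gfp_general (r : A → A → Prop) (hfin : Finitary r)
    (X : Set A) (hdef : X ⊆ defense r X) :
    defense r (⋂ k, (defense r)^[k] (neut r X)) = ⋂ k, (defense r)^[k] (neut r X) ∧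
      (⋂ k, (defense r)^[k] (neut r X)) ⊆ neut r X ∧
      ∀ Z, defense r Z = Z → Z ⊆ neut r X → Z ⊆ ⋂ k, (defense r)^[k] (neut r X) :=
  ⟨(defense_mono r).isFixedPt_iInf_iterate (defense_neut_subset hdef)
      fun _ hc => iInter_defense_subset_defense_iInter hfin hc,
    Set.iInter_subset _ 0,
    fun _ hZ hZN => (defense_mono r).le_iInf_iterate_of_isFixedPt hZ hZN⟩

theorem iInter_iterates_gfp (r : A → A → Prop) (hfin : Finitary r)
    (X : Set A) (hcf : X ⊆ neut r X) (hdef : X ⊆ defense r X) :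
    defense r (⋂ k, (defense r)^[k] (neut r X)) = ⋂ k, (defense r)^[k] (neut r X) ∧
      (⋂ k, (defense r)^[k] (neut r X)) ⊆ neut r X ∧
      ∀ Z, defense r Z = Z → Z ⊆ neut r X → Z ⊆ ⋂ k, (defense r)^[k] (neut r X) :=
  iInter_iterates_gfp_general r hfin X hdef
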